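/- arXiv:1906.08991 — 2 statements merged into one kernel-verified Lean document; each statement's English description precedes it below -/
import Mathlib

section
/- Let (u₀, k, f): Ω → 𝔻 be random data. Then there exists a random entropy solution u: Ω → C([0,T]; L¹(ℝ)) of the random conservation law u_t + f(ω; k(ω;x), u)_x = 0, u(ω; ·, 0) = u₀(ω), obtained as the composition of the (Lipschitz continuous) deterministic solution operator S: 𝔻 → C([0,T]; L¹(ℝ)) with the random data; moreover it is pathwise unique: if random data (u₀, k, f) and (v₀, l, g) are P-versions of each other (i.e. ‖(u₀(ω), k(ω), f(ω)) − (v₀(ω), l(ω), g(ω))‖_𝔻 = 0 for P-a.e. ω), then the corresponding random entropy solutions u and v satisfy u(ω) = v(ω) in C([0,T]; L¹(ℝ)) for P-a.e. ω. -/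
open MeasureTheory
open scoped ENNReal NNReal

/-- **Existence and pathwise uniqueness of random entropy solutions.**
Abstract formulation: `𝔻` is the Banach space of data (in the paper,
`𝔻 = (BV ∩ L^∞)(ℝ) × L^∞(ℝ) × C²(R; ℝ)` with its natural norm), `G ⊆ 𝔻` is the set of
admissible data (data satisfying Assumption (A) with the uniform constants of random data),
`Entr d w` is the predicate "`w` is an entropy solution of the conservation law with data `d`",
and `S : 𝔻 → C([0,T]; L¹(ℝ))` is the Lipschitz continuous deterministic solution operator,
which for admissible data produces the unique entropy solution.

Then for any random data, i.e. any strongly measurable `data : Ω → 𝔻` taking values in `G`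
almost surely, there exists a random entropy solution `u : Ω → C([0,T]; L¹(ℝ))` (a strongly
measurable map that is almost surely an entropy solution for the data), namely `u = S ∘ data`;
moreover it is pathwise unique: if random data `data` and `data'` are `P`-versions of each
other (i.e. `‖data ω − data' ω‖_𝔻 = 0` for `P`-a.e. `ω`), then any random entropy solutions
`u` of `data` and `v` of `data'` satisfy `u ω = v ω` in `C([0,T]; L¹(ℝ))` for `P`-a.e. `ω`. -/
theorem random_entropy_solution_existence_pathwise_uniqueness
    (T : ℝ) (hT : 0 < T)
    (𝔻 : Type*) [NormedAddCommGroup 𝔻]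
    (G : Set 𝔻)
    (Entr : 𝔻 → C(Set.Icc (0 : ℝ) T, Lp ℝ 1 (volume : Measure ℝ)) → Prop)
    (S : 𝔻 → C(Set.Icc (0 : ℝ) T, Lp ℝ 1 (volume : Measure ℝ)))
    (L : ℝ≥0) (hS : LipschitzWith L S)
    (hSsol : ∀ d ∈ G, Entr d (S d))
    (hSuniq : ∀ d ∈ G, ∀ w, Entr d w → w = S d)
    (Ω : Type*) [MeasurableSpace Ω] (P : Measure Ω) [IsProbabilityMeasure P]
    (data : Ω → 𝔻) (hdata : StronglyMeasurable data)
    (hdataG : ∀ᵐ ω ∂P, data ω ∈ G) :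
    ∃ u : Ω → C(Set.Icc (0 : ℝ) T, Lp ℝ 1 (volume : Measure ℝ)),
      u = S ∘ data ∧ StronglyMeasurable u ∧ (∀ᵐ ω ∂P, Entr (data ω) (u ω)) ∧
      ∀ data' : Ω → 𝔻, StronglyMeasurable data' → (∀ᵐ ω ∂P, data' ω ∈ G) →
        (∀ᵐ ω ∂P, ‖data ω - data' ω‖ = 0) →
        ∀ v : Ω → C(Set.Icc (0 : ℝ) T, Lp ℝ 1 (volume : Measure ℝ)),
          StronglyMeasurable v → (∀ᵐ ω ∂P, Entr (data' ω) (v ω)) →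
          ∀ᵐ ω ∂P, u ω = v ω := by
  refine ⟨S ∘ data, rfl, hS.continuous.comp_stronglyMeasurable hdata, ?_, ?_⟩
  · filter_upwards [hdataG] with ω hω using hSsol _ hω
  · intro data' _ hdata'G heq v _ hvEntr
    filter_upwards [hdataG, hdata'G, heq, hvEntr] with ω h1 h2 h3 h4
    have hde : data ω = data' ω := by
      exact sub_eq_zero.mp (norm_eq_zero.mp h3)
    simp only [Function.comp_apply, hde]
    exact (hSuniq _ h2 _ h4).symm
end

section
/- Let (f, k, u₀) satisfy Assumption (A) and let u_Δx be the piecewise constant finite volume approximation produced by the upwind-type scheme with ghost-cell Rankine–Hugoniot coupling, under the CFL condition λ max_i sup_u (f^{(i)})'(u) ≤ 1. Then for all t ∈ [0,T]: ‖u_Δx(·,t)‖_{L^∞(ℝ)} ≤ (C_f/α) ‖u₀‖_{L^∞(ℝ)}, where C_f = max_i ‖f^{(i)}‖_Lip. -/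
open MeasureTheory
open scoped ENNReal NNReal

/-- The index of the constancy interval of a piecewise constant function with jump points
`ξ 0 < ξ 1 < ⋯ < ξ (N-1)` containing the point `x`. -/
noncomputable def stepIndex {N : ℕ} (ξ : Fin N → ℝ) (x : ℝ) : Fin (N + 1) :=
  ⟨(Finset.univ.filter fun i => ξ i < x).card,
    Nat.lt_succ_of_le (le_trans (Finset.card_filter_le _ _) (by simp))⟩

/-- `k : ℝ → ℝ` is piecewise constant with finitely many discontinuities. -/
def PiecewiseConst (k : ℝ → ℝ) : Prop :=
  ∃ (N : ℕ) (ξ : Fin N → ℝ) (c : Fin (N + 1) → ℝ),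
    StrictMono ξ ∧ ∀ x : ℝ, k x = c (stepIndex ξ x)

/-- **Assumption (A)**: the flux `f ∈ C²(ℝ²; ℝ)` satisfies `∂_u f(a, u) ≥ α > 0` and
`f(a, 0) = 0` for all `a`; the coefficient `k` is piecewise constant with finitely many
discontinuities; the initial datum `u₀ ∈ (L^∞ ∩ BV)(ℝ)`. -/
structure AssumptionA (α : ℝ) (f : ℝ → ℝ → ℝ) (k u₀ : ℝ → ℝ) : Prop where
  alpha_pos : 0 < α
  f_smooth : ContDiff ℝ 2 (Function.uncurry f)
  f_mono : ∀ a u : ℝ, α ≤ deriv (f a) u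
  f_zero : ∀ a : ℝ, f a 0 = 0
  k_pc : PiecewiseConst k
  u₀_bdd : ∃ B : ℝ, ∀ x, |u₀ x| ≤ B
  u₀_bv : BoundedVariationOn u₀ Set.univ

/-- Adapted (Kružkov-type) entropy solution `u = u(x,t)` on the time interval `[0,T]` of
`u_t + f(k(x),u)_x = 0`, `u(·,0) = u₀`: `u ∈ C([0,T]; L¹(ℝ)) ∩ L^∞`, and for every `p ∈ ℝ`
with adapted constant `c_p` (characterized by `f(k(x), c_p(x)) = p`) and every nonnegative
test function `φ ∈ C_c^∞(ℝ × [0,T])` the adapted entropy inequality holds. -/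
structure IsEntropySolution (T : ℝ) (f : ℝ → ℝ → ℝ) (k u₀ : ℝ → ℝ)
    (u : ℝ → ℝ → ℝ) : Prop where
  bounded : ∃ B : ℝ, ∀ x t, |u x t| ≤ B
  integrable : ∀ t ∈ Set.Icc (0 : ℝ) T, Integrable (fun x => u x t)
  l1_continuous : ∀ t ∈ Set.Icc (0 : ℝ) T,
    Filter.Tendsto (fun s => ∫ x, |u x s - u x t|)
      (nhdsWithin t (Set.Icc (0 : ℝ) T)) (nhds 0)
  entropy : ∀ (p : ℝ) (c : ℝ → ℝ), (∀ x, f (k x) (c x) = p) →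
    ∀ φ : ℝ → ℝ → ℝ, ContDiff ℝ (⊤ : ℕ∞) (Function.uncurry φ) →
      HasCompactSupport (Function.uncurry φ) → (∀ x t, 0 ≤ φ x t) →
      0 ≤ (∫ t in Set.Ioc (0 : ℝ) T, ∫ x,
              (|u x t - c x| * deriv (φ x) t
                + Real.sign (u x t - c x) * (f (k x) (u x t) - f (k x) (c x))
                  * deriv (fun y => φ y t) x))
            - (∫ x, |u x T - c x| * φ x T) + ∫ x, |u₀ x - c x| * φ x 0


/-- The index of the region (constancy interval of `k`) containing the grid cell
`C_j = (j·Δx, (j+1)·Δx)`, for interface positions `P : Fin N → ℤ` (the cell interface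
`x_{P_i − 1/2} = P_i · Δx` carries the `i`-th discontinuity of `k`). -/
noncomputable def cellIndex {N : ℕ} (P : Fin N → ℤ) (j : ℤ) : Fin (N + 1) :=
  ⟨(Finset.univ.filter fun i => P i ≤ j).card,
    Nat.lt_succ_of_le (le_trans (Finset.card_filter_le _ _) (by simp))⟩

/-- The upwind-type finite volume scheme with ghost-cell Rankine–Hugoniot coupling on a
uniform grid of size `Δx` (cells `C_j = (j·Δx, (j+1)·Δx)`) aligned with the discontinuities
`ξ i = P i · Δx` of the coefficient, with time step `Δt` and `λ = Δt/Δx`: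
`u_j^0 = (1/Δx) ∫_{C_j} u₀`;
`u_j^{n+1} = u_j^n − λ (f^{(i)}(u_j^n) − f^{(i)}(u_{j−1}^n))` for `P_i < j < P_{i+1}`;
and the ghost-cell update `f^{(i)}(u_{P_i}^{n+1}) = f^{(i−1)}(u_{P_i−1}^{n+1})`, i.e.
`u_{P_i}^{n+1} = (f^{(i)})^{-1}(f^{(i−1)}(u_{P_i − 1}^{n+1}))`, where `f^{(i)} = f(kv i, ·)`
is the flux in the `i`-th region. -/
structure IsFVMScheme {N : ℕ} (f : ℝ → ℝ → ℝ) (kv : Fin (N + 1) → ℝ)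
    (ξ : Fin N → ℝ) (u₀ : ℝ → ℝ) (Δx Δt : ℝ) (P : Fin N → ℤ) (v : ℕ → ℤ → ℝ) : Prop where
  dx_pos : 0 < Δx
  dt_pos : 0 < Δt
  align : ∀ i : Fin N, ξ i = (P i : ℝ) * Δx
  init : ∀ j : ℤ, v 0 j = Δx⁻¹ * ∫ x in Set.Ioo ((j : ℝ) * Δx) (((j : ℝ) + 1) * Δx), u₀ x
  interior : ∀ (n : ℕ) (j : ℤ), (∀ i : Fin N, j ≠ P i) →
    v (n + 1) j = v n j - (Δt / Δx) *
      (f (kv (cellIndex P j)) (v n j) - f (kv (cellIndex P j)) (v n (j - 1)))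
  interface : ∀ (n : ℕ) (i : Fin N),
    f (kv i.succ) (v (n + 1) (P i)) = f (kv i.castSucc) (v (n + 1) (P i - 1))

/-- The CFL condition `λ · max_i sup_u (f^{(i)})'(u) ≤ 1`, `λ = Δt/Δx`. -/
def CFLCondition {N : ℕ} (f : ℝ → ℝ → ℝ) (kv : Fin (N + 1) → ℝ) (Δx Δt : ℝ) : Prop :=
  ∀ (i : Fin (N + 1)) (w : ℝ), (Δt / Δx) * deriv (f (kv i)) w ≤ 1

/-- The piecewise constant finite volume approximation
`u_Δx(x,t) = u_j^n` for `(x,t) ∈ C_j × [t^n, t^{n+1})`. -/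
noncomputable def fvApprox (Δx Δt : ℝ) (v : ℕ → ℤ → ℝ) (x t : ℝ) : ℝ :=
  v ⌊t / Δt⌋₊ ⌊x / Δx⌋

lemma cellIndex_interface {N : ℕ} {P : Fin N → ℤ} (hP : StrictMono P) (i : Fin N) :
    cellIndex P (P i) = i.succ := by
  apply Fin.ext
  simp only [cellIndex, Fin.val_succ]
  have h : (Finset.univ.filter fun i' => P i' ≤ P i) = Finset.Iic i := by
    ext i'; simp [hP.le_iff_le]
  rw [h, Fin.card_Iic]

lemma cellIndex_interface_left {N : ℕ} {P : Fin N → ℤ} (hP : StrictMono P) (i : Fin N) :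
    cellIndex P (P i - 1) = i.castSucc := by
  apply Fin.ext
  simp only [cellIndex, Fin.coe_castSucc]
  have h : (Finset.univ.filter fun i' => P i' ≤ P i - 1) = Finset.Iio i := by
    ext i'
    simp only [Finset.mem_filter, Finset.mem_univ, true_and, Finset.mem_Iio]
    constructor
    · intro hle
      by_contra hlt
      exact absurd (hP.le_iff_le.2 (not_lt.1 hlt)) (by omega)
    · intro hlt
      have := hP hlt
      omega
  rw [h, Fin.card_Iio]

lemma cellIndex_shift {N : ℕ} {P : Fin N → ℤ} {j : ℤ} (hj : ∀ i : Fin N, j ≠ P i) :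
    cellIndex P (j - 1) = cellIndex P j := by
  apply Fin.ext
  simp only [cellIndex]
  congr 1
  apply Finset.filter_congr
  intro i _
  have := hj i
  constructor <;> intro h' <;> omega

lemma flux_growth {α : ℝ} {g : ℝ → ℝ} (hg : Differentiable ℝ g) (hα : ∀ u, α ≤ deriv g u)
    (h0 : g 0 = 0) (u : ℝ) : α * |u| ≤ |g u| := by
  rcases le_total 0 u with h | h
  · have h1 := mul_sub_le_image_sub_of_le_deriv hg hα h
    rw [h0, sub_zero, sub_zero] at h1
    rw [abs_of_nonneg h]
    exact h1.trans (le_abs_self _)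
  · have h1 := mul_sub_le_image_sub_of_le_deriv hg hα h
    rw [h0, zero_sub, zero_sub] at h1
    rw [abs_of_nonpos h]
    exact h1.trans (neg_le_abs _)

lemma step_bound {lam C : ℝ} {g : ℝ → ℝ} (hg : Differentiable ℝ g)
    (hpos : ∀ u, 0 < deriv g u) (hcfl : ∀ u, lam * deriv g u ≤ 1) (hlam : 0 < lam)
    (a b : ℝ) (ha : |g a| ≤ C) (hb : |g b| ≤ C) :
    |g (b - lam * (g b - g a))| ≤ C := by
  have hmono : Monotone g := (strictMono_of_deriv_pos hpos).monotone
  have hmul : ∀ ⦃x y : ℝ⦄, x ≤ y → lam * (g y - g x) ≤ y - x := by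
    intro x y hxy
    have h2 : g y - g x ≤ (1 / lam) * (y - x) :=
      image_sub_le_mul_sub_of_deriv_le hg (fun u => by
        rw [le_div_iff₀ hlam, mul_comm]; exact hcfl u) hxy
    have h3 := mul_le_mul_of_nonneg_left h2 hlam.le
    rw [← mul_assoc, mul_one_div, div_self hlam.ne', one_mul] at h3
    exact h3
  set b' := b - lam * (g b - g a) with hb'def
  have hlow : min a b ≤ b' := by
    rcases le_total a b with h | h
    · have := hmul h
      simp only [min_eq_left h, hb'def]; linarith
    · have h1 : g b ≤ g a := hmono h
      have h2 : lam * (g b - g a) ≤ 0 :=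
        mul_nonpos_of_nonneg_of_nonpos hlam.le (by linarith)
      simp only [min_eq_right h, hb'def]; linarith
  have hhigh : b' ≤ max a b := by
    rcases le_total a b with h | h
    · have h1 : g a ≤ g b := hmono h
      have h2 : 0 ≤ lam * (g b - g a) := mul_nonneg hlam.le (by linarith)
      simp only [max_eq_right h, hb'def]; linarith
    · have := hmul h
      simp only [max_eq_left h, hb'def]; linarith
  rw [abs_le] at ha hb ⊢
  constructor
  · calc -C ≤ min (g a) (g b) := le_min ha.1 hb.1
    _ = g (min a b) := (hmono.map_min).symm
    _ ≤ g b' := hmono hlow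
  · calc g b' ≤ g (max a b) := hmono hhigh
    _ = max (g a) (g b) := hmono.map_max
    _ ≤ C := max_le ha.2 hb.2

lemma init_bound {u₀ : ℝ → ℝ} (hmeas : Measurable u₀) {M : ℝ}
    (hae : ∀ᵐ x, |u₀ x| ≤ M) {Δx : ℝ} (hdx : 0 < Δx) (j : ℤ) :
    |Δx⁻¹ * ∫ x in Set.Ioo ((j:ℝ)*Δx) (((j:ℝ)+1)*Δx), u₀ x| ≤ M := by
  set s := Set.Ioo ((j:ℝ)*Δx) (((j:ℝ)+1)*Δx) with hs
  have hvol : volume s = ENNReal.ofReal Δx := by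
    rw [hs, Real.volume_Ioo]; congr 1; ring
  have hvfin : volume s < ⊤ := by rw [hvol]; exact ENNReal.ofReal_lt_top
  have hconst : IntegrableOn (fun _ => M) s volume :=
    integrableOn_const hvfin.ne
  have haes : ∀ᵐ x ∂(volume.restrict s), ‖u₀ x‖ ≤ M := by
    refine ae_restrict_of_ae ?_
    filter_upwards [hae] with x hx
    rwa [Real.norm_eq_abs]
  have hInt : IntegrableOn u₀ s volume :=
    Integrable.mono' hconst (hmeas.aestronglyMeasurable.restrict) haes
  have hIb : |∫ x in s, u₀ x| ≤ M * Δx := by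
    calc |∫ x in s, u₀ x| = ‖∫ x in s, u₀ x‖ := (Real.norm_eq_abs _).symm
      _ ≤ ∫ x in s, ‖u₀ x‖ := norm_integral_le_integral_norm _
      _ ≤ ∫ _x in s, M := integral_mono_ae hInt.norm hconst haes
      _ = (volume s).toReal * M := by rw [setIntegral_const, smul_eq_mul]; rfl
      _ = M * Δx := by rw [hvol, ENNReal.toReal_ofReal hdx.le]; ring
  rw [abs_mul, abs_of_nonneg (inv_nonneg.2 hdx.le)]
  calc Δx⁻¹ * |∫ x in s, u₀ x| ≤ Δx⁻¹ * (M * Δx) :=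
        mul_le_mul_of_nonneg_left hIb (inv_nonneg.2 hdx.le)
    _ = M := by field_simp


/-- **`L^∞` stability of the finite volume method.**
Let `(f, k, u₀)` satisfy Assumption (A) (with `k` piecewise constant with jumps `ξ` and
values `kv`) and let `u_Δx` be the piecewise constant finite volume approximation produced
by the upwind-type scheme with ghost-cell Rankine–Hugoniot coupling, under the CFL condition
`λ max_i sup_u (f^{(i)})'(u) ≤ 1`. Then for all `t ∈ [0,T]`:
`‖u_Δx(·,t)‖_{L^∞(ℝ)} ≤ (C_f/α) ‖u₀‖_{L^∞(ℝ)}`, where `C_f = max_i ‖f^{(i)}‖_Lip`. -/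
theorem fvm_linfty_stability
    (T α Cf : ℝ) (hT : 0 < T)
    (N : ℕ) (ξ : Fin N → ℝ) (kv : Fin (N + 1) → ℝ) (hξ : StrictMono ξ)
    (f : ℝ → ℝ → ℝ) (k u₀ : ℝ → ℝ) (hk : ∀ x, k x = kv (stepIndex ξ x))
    (hA : AssumptionA α f k u₀)
    (hCf : ∀ (i : Fin (N + 1)) (w w' : ℝ), |f (kv i) w - f (kv i) w'| ≤ Cf * |w - w'|)
    (Δx Δt : ℝ) (P : Fin N → ℤ) (v : ℕ → ℤ → ℝ)
    (hscheme : IsFVMScheme f kv ξ u₀ Δx Δt P v)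
    (hCFL : CFLCondition f kv Δx Δt) :
    ∀ t ∈ Set.Icc (0 : ℝ) T,
      eLpNorm (fun x => fvApprox Δx Δt v x t) ⊤ volume
        ≤ ENNReal.ofReal (Cf / α) * eLpNorm u₀ ⊤ volume := by
  have hAL : 0 < α := hA.alpha_pos
  intro t ht
  obtain ⟨hdx, hdt, halign, hinit, hintr, hifc⟩ := hscheme
  have hlam : 0 < Δt / Δx := div_pos hdt hdx
  -- differentiability of flux sections
  have hfd : ∀ a : ℝ, Differentiable ℝ (f a) := by
    intro a
    have h1 : ContDiff ℝ 2 (fun u => Function.uncurry f (a, u)) :=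
      hA.f_smooth.comp (contDiff_const.prodMk contDiff_id)
    exact h1.differentiable (by norm_num)
  have hpos : ∀ a u : ℝ, 0 < deriv (f a) u := fun a u => lt_of_lt_of_le hAL (hA.f_mono a u)
  -- strict monotonicity of P
  have hP : StrictMono P := by
    intro i i' hii
    have h1 := hξ hii
    rw [halign i, halign i'] at h1
    exact_mod_cast (lt_of_mul_lt_mul_right h1 hdx.le)
  -- essential sup bound on u₀
  set E := eLpNorm u₀ ⊤ volume with hE
  obtain ⟨B, hB⟩ := hA.u₀_bdd
  have hEfin : E ≠ ⊤ := by
    have h1 : E ≤ ENNReal.ofReal B := by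
      rw [hE, eLpNorm_exponent_top]
      exact eLpNormEssSup_le_of_ae_bound (Filter.Eventually.of_forall fun x => by
        rw [Real.norm_eq_abs]; exact hB x)
    exact (h1.trans_lt ENNReal.ofReal_lt_top).ne
  set M := E.toReal with hM
  have hae : ∀ᵐ x, |u₀ x| ≤ M := by
    filter_upwards [ae_le_eLpNormEssSup (f := u₀) (μ := volume)] with x hx
    rw [← eLpNorm_exponent_top, ← hE] at hx
    calc |u₀ x| = ((‖u₀ x‖₊ : ℝ≥0∞)).toReal := by simp [Real.norm_eq_abs]
      _ ≤ E.toReal := ENNReal.toReal_mono hEfin hx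
  -- measurability of u₀
  have hmeas : Measurable u₀ := by
    obtain ⟨p, q, hp, hq, hpq⟩ :=
      hA.u₀_bv.locallyBoundedVariationOn.exists_monotoneOn_sub_monotoneOn
    rw [hpq]
    exact ((monotoneOn_univ.1 hp).measurable).sub ((monotoneOn_univ.1 hq).measurable)
  -- Cf nonneg
  have hCf0 : 0 ≤ Cf := by
    have h1 := flux_growth (hfd (kv 0)) (hA.f_mono (kv 0)) (hA.f_zero (kv 0)) 1
    have h2 := hCf 0 1 0
    rw [hA.f_zero, sub_zero, sub_zero] at h2
    simp only [abs_one, mul_one] at h1 h2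
    linarith
  -- the key flux invariant
  have hkey : ∀ n (j : ℤ), |f (kv (cellIndex P j)) (v n j)| ≤ Cf * M := by
    intro n
    induction n with
    | zero =>
      intro j
      have hv0 : |v 0 j| ≤ M := by rw [hinit j]; exact init_bound hmeas hae hdx j
      have h2 := hCf (cellIndex P j) (v 0 j) 0
      rw [hA.f_zero, sub_zero, sub_zero] at h2
      exact h2.trans (mul_le_mul_of_nonneg_left hv0 hCf0)
    | succ n ih =>
      have hintstep : ∀ j : ℤ, (∀ i : Fin N, j ≠ P i) →
          |f (kv (cellIndex P j)) (v (n+1) j)| ≤ Cf * M := by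
        intro j hj
        rw [hintr n j hj]
        have hb := ih j
        have ha' : |f (kv (cellIndex P j)) (v n (j-1))| ≤ Cf * M := by
          rw [← cellIndex_shift hj]; exact ih (j-1)
        exact step_bound (hfd _) (hpos _) (fun w => hCFL _ w) hlam _ _ ha' hb
      have hiface : ∀ m : ℕ, ∀ i : Fin N, i.val < m →
          |f (kv (cellIndex P (P i))) (v (n+1) (P i))| ≤ Cf * M := by
        intro m
        induction m with
        | zero => intro i hi; omega
        | succ m ihm =>
          intro i hi
          rw [cellIndex_interface hP i, hifc n i]
          by_cases hcase : ∀ i' : Fin N, P i - 1 ≠ P i'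
          · have h3 := hintstep (P i - 1) hcase
            rwa [cellIndex_interface_left hP i] at h3
          · push_neg at hcase
            obtain ⟨i', heq⟩ := hcase
            have hlt : i' < i := hP.lt_iff_lt.1 (by omega)
            have hltv : i'.val < i.val := hlt
            have hb := ihm i' (by omega)
            rw [cellIndex_interface hP i'] at hb
            have h5 : i.castSucc = i'.succ := by
              rw [← cellIndex_interface_left hP i, heq, cellIndex_interface hP i']
            rw [h5, heq]
            exact hb
      intro j
      by_cases hj : ∀ i : Fin N, j ≠ P i
      · exact hintstep j hj
      · push_neg at hj
        obtain ⟨i, rfl⟩ := hj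
        exact hiface (i.val + 1) i (Nat.lt_succ_self _)
  -- pointwise bound on the approximation
  have hbd : ∀ x : ℝ, ‖fvApprox Δx Δt v x t‖ ≤ (Cf / α) * M := by
    intro x
    rw [Real.norm_eq_abs]
    show |v ⌊t / Δt⌋₊ ⌊x / Δx⌋| ≤ (Cf / α) * M
    set n := ⌊t / Δt⌋₊
    set j := ⌊x / Δx⌋
    have h1 := flux_growth (hfd (kv (cellIndex P j))) (hA.f_mono _) (hA.f_zero _) (v n j)
    have h2 := hkey n j
    rw [div_mul_eq_mul_div, le_div_iff₀ hAL]
    calc |v n j| * α = α * |v n j| := mul_comm _ _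
      _ ≤ |f (kv (cellIndex P j)) (v n j)| := h1
      _ ≤ Cf * M := h2
  calc eLpNorm (fun x => fvApprox Δx Δt v x t) ⊤ volume
      ≤ ENNReal.ofReal ((Cf / α) * M) := by
        rw [eLpNorm_exponent_top]
        exact eLpNormEssSup_le_of_ae_bound (Filter.Eventually.of_forall hbd)
    _ = ENNReal.ofReal (Cf / α) * ENNReal.ofReal M :=
        ENNReal.ofReal_mul (div_nonneg hCf0 hAL.le)
    _ = ENNReal.ofReal (Cf / α) * E := by rw [hM, ENNReal.ofReal_toReal hEfin]
end
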